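/- arXiv:1304.6461 — 7 statements merged into one kernel-verified Lean document; each statement's English description precedes it below -/
import Mathlib

section
/- Let f:[0,R)→ℝ be continuously differentiable with f(0)=0, f'(0)=−1, and f' convex and strictly increasing, and let ν = sup{t∈[0,R): f'(t)<0}. Then the function t ↦ (t f'(t) − f(t))/t² is positive and increasing on (0,ν). -/
/-- Under the majorant hypotheses, `t ↦ (t f'(t) - f(t))/t²` is positive and increasing
on `(0, ν)`, where `ν = sup{t ∈ [0,R) : f'(t) < 0}`. -/
theorem stmt_5 (R : ℝ) (hR : 0 < R) (f f' : ℝ → ℝ)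
    (hder : ∀ t ∈ Set.Ico 0 R, HasDerivAt f (f' t) t)
    (hcont : ContinuousOn f' (Set.Ico 0 R))
    (h1₀ : f 0 = 0) (h1₁ : f' 0 = -1)
    (h2₀ : ConvexOn ℝ (Set.Ico 0 R) f')
    (h2₁ : StrictMonoOn f' (Set.Ico 0 R))
    (ν : ℝ) (hν : ν = sSup {t | t ∈ Set.Ico 0 R ∧ f' t < 0}) :
    (∀ t ∈ Set.Ioo 0 ν, 0 < (t * f' t - f t) / t ^ 2) ∧
      MonotoneOn (fun t => (t * f' t - f t) / t ^ 2) (Set.Ioo 0 ν) := by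
  -- ν ≤ R
  have hνR : ν ≤ R := by
    rw [hν]
    exact Real.sSup_le (fun x hx => hx.1.2.le) hR.le
  -- FTC : f t = ∫ f' on [0,t]
  have hFTC : ∀ t, 0 ≤ t → t < R → f t = ∫ s in (0:ℝ)..t, f' s := by
    intro t ht htR
    have hsub : Set.Icc (0:ℝ) t ⊆ Set.Ico 0 R := fun x hx => ⟨hx.1, lt_of_le_of_lt hx.2 htR⟩
    have := intervalIntegral.integral_eq_sub_of_hasDerivAt
      (f := f) (f' := f') (a := (0:ℝ)) (b := t)
      (fun x hx => hder x (hsub (by rwa [Set.uIcc_of_le ht] at hx)))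
      (((hcont.mono hsub)).intervalIntegrable_of_Icc ht)
    rw [this, h1₀, sub_zero]
  -- Positivity
  have hkey : ∀ t, 0 < t → t < R → 0 < t * f' t - f t := by
    intro t ht htR
    have hsub : Set.Icc (0:ℝ) t ⊆ Set.Ico 0 R := fun x hx => ⟨hx.1, lt_of_le_of_lt hx.2 htR⟩
    have htmem : t ∈ Set.Ico 0 R := ⟨ht.le, htR⟩
    have hlt : (∫ s in (0:ℝ)..t, f' s) < ∫ _ in (0:ℝ)..t, f' t := by
      apply intervalIntegral.integral_lt_integral_of_continuousOn_of_le_of_exists_lt ht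
        (hcont.mono hsub) continuousOn_const
      · intro x hx
        rcases eq_or_lt_of_le hx.2 with rfl | hxt
        · exact le_rfl
        · exact (h2₁ (hsub ⟨hx.1.le, hx.2⟩) htmem hxt).le
      · exact ⟨0, Set.left_mem_Icc.2 ht.le, by rw [h1₁]; linarith [h2₁ ⟨le_refl 0, hR⟩ htmem ht]⟩
    rw [intervalIntegral.integral_const, smul_eq_mul, sub_zero] at hlt
    rw [hFTC t ht.le htR]
    linarith
  -- Monotonicity core
  have hmono : ∀ a b : ℝ, 0 < a → a ≤ b → b < R →
      (a * f' a - f a) / a ^ 2 ≤ (b * f' b - f b) / b ^ 2 := by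
    intro a b ha hab hbR
    have hb : 0 < b := lt_of_lt_of_le ha hab
    have ha0 : a ≠ 0 := ha.ne'
    have hb0 : b ≠ 0 := hb.ne'
    set c : ℝ := b / a with hc
    have hca : c * a = b := div_mul_cancel₀ b ha0
    have hc1 : 1 ≤ c := (one_le_div ha).2 hab
    have hcpos : 0 < c := lt_of_lt_of_le one_pos hc1
    have hc0 : c ≠ 0 := hcpos.ne'
    have hsubb : Set.Icc (0:ℝ) b ⊆ Set.Ico 0 R := fun x hx => ⟨hx.1, lt_of_le_of_lt hx.2 hbR⟩
    have hsuba : Set.Icc (0:ℝ) a ⊆ Set.Ico 0 R := fun x hx =>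
      hsubb ⟨hx.1, le_trans hx.2 hab⟩
    -- pointwise inequality
    have hpt : ∀ u ∈ Set.Icc (0:ℝ) a,
        b * f' a + a * f' (c * u) ≤ b * f' u + a * f' b := by
      intro u hu
      rcases eq_or_lt_of_le hu.2 with rfl | hua
      · rw [hca]
      · have hcu_lt : c * u < b := by
          rw [← hca]
          exact mul_lt_mul_of_pos_left hua (by linarith)
        have hucu : u ≤ c * u := le_mul_of_one_le_left hu.1 hc1
        have hcu_mem : c * u ∈ Set.Ico 0 R :=
          hsubb ⟨mul_nonneg hcpos.le hu.1, hcu_lt.le⟩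
        have humem : u ∈ Set.Ico 0 R := hsuba hu
        have hamem : a ∈ Set.Ico 0 R := hsuba ⟨ha.le, le_refl a⟩
        have hbmem : b ∈ Set.Ico 0 R := hsubb ⟨hb.le, le_refl b⟩
        -- slope chain
        have s1 : (f' a - f' u) / (a - u) ≤ (f' b - f' u) / (b - u) :=
          h2₀.secant_mono humem hamem hbmem (by linarith) (by linarith) hab
        have s2 : (f' u - f' b) / (u - b) ≤ (f' (c * u) - f' b) / (c * u - b) :=
          h2₀.secant_mono hbmem humem hcu_mem (by intro h; nlinarith) (by intro h; nlinarith) hucu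
        have e2 : (f' u - f' b) / (u - b) = (f' b - f' u) / (b - u) := by
          rw [← neg_div_neg_eq]; ring_nf
        have e2' : (f' (c * u) - f' b) / (c * u - b) = (f' b - f' (c * u)) / (b - c * u) := by
          rw [← neg_div_neg_eq]; ring_nf
        rw [e2, e2'] at s2
        have s3 : (f' a - f' u) / (a - u) ≤ (f' b - f' (c * u)) / (b - c * u) := s1.trans s2
        have hau : (0:ℝ) < a - u := by linarith
        have hbcu : (0:ℝ) < b - c * u := by linarith
        rw [div_le_div_iff₀ hau hbcu] at s3
        have hbcu_eq : b - c * u = c * (a - u) := by rw [← hca]; ring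
        rw [hbcu_eq] at s3
        have h5 : ((f' a - f' u) * c) * (a - u) ≤ (f' b - f' (c * u)) * (a - u) := by
          linear_combination s3
        have h4 : (f' a - f' u) * c ≤ f' b - f' (c * u) := le_of_mul_le_mul_right h5 hau
        have h6 := mul_le_mul_of_nonneg_left h4 ha.le
        have h7 : a * ((f' a - f' u) * c) = b * (f' a - f' u) := by rw [← hca]; ring
        rw [h7] at h6
        nlinarith [h6]
    -- integrate
    have hint1 : IntervalIntegrable (fun u => b * f' a + a * f' (c * u)) MeasureTheory.volume 0 a := by
      apply IntervalIntegrable.add (intervalIntegrable_const)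
      apply IntervalIntegrable.const_mul
      apply ContinuousOn.intervalIntegrable_of_Icc ha.le
      apply (hcont.mono hsubb).comp (continuous_const.mul continuous_id).continuousOn
      intro u hu
      refine ⟨mul_nonneg hcpos.le hu.1, ?_⟩
      calc c * u ≤ c * a := mul_le_mul_of_nonneg_left hu.2 hcpos.le
        _ = b := hca
    have hint2 : IntervalIntegrable (fun u => b * f' u + a * f' b) MeasureTheory.volume 0 a := by
      apply IntervalIntegrable.add _ intervalIntegrable_const
      exact (((hcont.mono hsuba)).intervalIntegrable_of_Icc ha.le).const_mul b
    have hI := intervalIntegral.integral_mono_on ha.le hint1 hint2 hpt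
    -- compute both integrals
    have hIcomp : (∫ u in (0:ℝ)..a, f' (c * u)) = (a / b) * f b := by
      rw [intervalIntegral.integral_comp_mul_left f' hc0]
      rw [mul_zero, hca, smul_eq_mul, ← hFTC b hb.le hbR, hc, inv_div]
    have hfa' : IntervalIntegrable f' MeasureTheory.volume 0 a :=
      ((hcont.mono hsuba)).intervalIntegrable_of_Icc ha.le
    have hfc' : IntervalIntegrable (fun u => f' (c * u)) MeasureTheory.volume 0 a := by
      apply ContinuousOn.intervalIntegrable_of_Icc ha.le
      apply (hcont.mono hsubb).comp (continuous_const.mul continuous_id).continuousOn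
      intro u hu
      refine ⟨mul_nonneg hcpos.le hu.1, ?_⟩
      calc c * u ≤ c * a := mul_le_mul_of_nonneg_left hu.2 hcpos.le
        _ = b := hca
    rw [intervalIntegral.integral_add intervalIntegrable_const (hfc'.const_mul a),
        intervalIntegral.integral_add (hfa'.const_mul b) intervalIntegrable_const,
        intervalIntegral.integral_const, intervalIntegral.integral_const_mul,
        intervalIntegral.integral_const_mul, intervalIntegral.integral_const,
        hIcomp, ← hFTC a ha.le (lt_of_le_of_lt hab hbR)] at hI
    -- hI : (a-0) • (b * f' a) + a * ((a/b) * f b) ≤ b * f a + (a-0) • (a * f' b)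
    rw [div_le_div_iff₀ (by positivity) (by positivity)]
    simp only [sub_zero, smul_eq_mul] at hI
    have hI2 : a * (b * f' a) * b + a * (a * f b) ≤ (b * f a + a * (a * f' b)) * b := by
      have := mul_le_mul_of_nonneg_right hI hb.le
      calc a * (b * f' a) * b + a * (a * f b)
          = (a * (b * f' a) + a * (a / b * f b)) * b := by field_simp
        _ ≤ _ := this
    nlinarith [hI2]
  constructor
  · intro t ht
    exact div_pos (hkey t ht.1 (lt_of_lt_of_le ht.2 hνR)) (pow_pos ht.1 2)
  · intro a ha b hb hab
    exact hmono a b ha.1 hab (lt_of_lt_of_le hb.2 hνR)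
end

section
/- Let f:[0,R)→ℝ be continuously differentiable with f(0)=0, f'(0)=−1, f' convex and strictly increasing, let c≥0, β>0, κ≥0 with [(1+√2)κ+1]·c·β·D⁺f'(0) < 1, and ν = sup{t∈[0,R): f'(t)<0}. Then ρ := sup{t∈(0,ν): ([f'(t)+1+κ][t f'(t)−f(t)+cβ(1+√2)(f'(t)+1)] + cβ[f'(t)+1])/(t·f'(t)²) < 1} is positive, and the displayed inequality holds for all t∈(0,ρ). -/
/-!
Write `A t = f' t - f t / t` and `B t = (f' t + 1) / t`. On `(0, ν)` the ratio equals
`((f' t + 1 + κ) (A t + cβ(1 + √2) B t) + cβ B t) / f' t ^ 2`. Since `f t / t` is the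
average `∫₀¹ f' (u t) du` and `f'` is convex and increasing, `A` is nondecreasing with
`0 ≤ A t ≤ f' t + 1`; `B` is a secant slope of the convex `f'`, hence nondecreasing and
tending to `D⁺f'(0)`. As `f'` is negative and increasing, `f' t ^ 2` decreases, so the ratio
is nondecreasing on `(0, ν)`, and its limit at `0⁺` is `((1 + √2)κ + 1) cβ D⁺f'(0) < 1`.
Hence the sublevel set `{ratio < 1}` is a nonempty initial segment of `(0, ν)`, whose
supremum is `ρ`.
-/

open Set Filter Topology intervalIntegral

theorem MonotoneOn.lt_of_lt_csSup_setOf_lt {α β : Type*} [ConditionallyCompleteLinearOrder α]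
    [Preorder β] {s : Set α} {g : α → β} {c : β} {t : α} (hg : MonotoneOn g s)
    (hne : {x | x ∈ s ∧ g x < c}.Nonempty) (ht : t ∈ s)
    (hlt : t < sSup {x | x ∈ s ∧ g x < c}) : g t < c := by
  obtain ⟨x, hx, htx⟩ := exists_lt_of_lt_csSup hne hlt
  exact (hg ht hx.1 htx.le).trans_lt hx.2

theorem ConvexOn.map_add_map_reflect_le {s : Set ℝ} {h : ℝ → ℝ} (hh : ConvexOn ℝ s h)
    {a b x : ℝ} (ha : a ∈ s) (hb : b ∈ s) (hax : a ≤ x) (hxb : x ≤ b) :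
    h x + h (a + b - x) ≤ h a + h b := by
  rcases (hax.trans hxb).eq_or_lt with rfl | hab
  · obtain rfl : x = a := le_antisymm hxb hax
    simp
  set θ := (b - x) / (b - a)
  have hθ₀ : 0 ≤ θ := div_nonneg (by linarith) (by linarith)
  have hθ₁ : 0 ≤ 1 - θ := by rw [sub_nonneg, div_le_one (by linarith)]; linarith
  have hθ : θ * (b - a) = b - x := div_mul_cancel₀ _ (sub_ne_zero.2 hab.ne')
  have hx : θ * a + (1 - θ) * b = x := by linear_combination -hθ
  have hy : (1 - θ) * a + θ * b = a + b - x := by linear_combination hθ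
  have h₁ := hh.2 ha hb hθ₀ hθ₁ (by ring)
  have h₂ := hh.2 ha hb hθ₁ hθ₀ (by ring)
  simp only [smul_eq_mul, hx, hy] at h₁ h₂
  linarith

section Average

variable {R : ℝ} {g : ℝ → ℝ}

theorem mul_mem_Ico_of_mem_Icc {u t : ℝ} (hu : u ∈ Icc 0 1) (ht : t ∈ Ico 0 R) :
    u * t ∈ Ico 0 R :=
  ⟨mul_nonneg hu.1 ht.1, (mul_le_of_le_one_left ht.1 hu.2).trans_lt ht.2⟩

theorem intervalIntegrable_comp_mul (hg : MonotoneOn g (Ico 0 R)) {t : ℝ} (ht : t ∈ Ico 0 R) :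
    IntervalIntegrable (fun u => g (u * t)) MeasureTheory.volume 0 1 := by
  refine MonotoneOn.intervalIntegrable fun u hu v hv huv => ?_
  rw [uIcc_of_le zero_le_one] at hu hv
  exact hg (mul_mem_Ico_of_mem_Icc hu ht) (mul_mem_Ico_of_mem_Icc hv ht)
    (mul_le_mul_of_nonneg_right huv ht.1)

theorem integral_comp_mul_mem_Icc (hg : MonotoneOn g (Ico 0 R)) {t : ℝ} (ht : t ∈ Ico 0 R) :
    ∫ u in (0 : ℝ)..1, g (u * t) ∈ Icc (g 0) (g t) := by
  have h0 : (0 : ℝ) ∈ Ico 0 R := ⟨le_rfl, ht.1.trans_lt ht.2⟩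
  constructor
  · simpa using integral_mono_on zero_le_one intervalIntegrable_const
      (intervalIntegrable_comp_mul hg ht) fun u hu =>
        hg h0 (mul_mem_Ico_of_mem_Icc hu ht) (mul_nonneg hu.1 ht.1)
  · simpa using integral_mono_on zero_le_one (intervalIntegrable_comp_mul hg ht)
      intervalIntegrable_const fun u hu =>
        hg (mul_mem_Ico_of_mem_Icc hu ht) ht (mul_le_of_le_one_left ht.1 hu.2)

theorem monotoneOn_sub_integral_comp_mul (hc : ConvexOn ℝ (Ico 0 R) g)
    (hg : MonotoneOn g (Ico 0 R)) :
    MonotoneOn (fun t => g t - ∫ u in (0 : ℝ)..1, g (u * t)) (Ico 0 R) := by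
  intro s hs t ht hst
  have key : ∀ u ∈ Icc (0 : ℝ) 1, g (u * t) - g t ≤ g (u * s) - g s := by
    intro u hu
    have hus := mul_mem_Ico_of_mem_Icc hu hs
    have hut := mul_mem_Ico_of_mem_Icc hu ht
    have hsy : s ≤ u * s + t - u * t := by nlinarith [hu.2]
    have hy : u * s + t - u * t ∈ Ico 0 R := ⟨hs.1.trans hsy, by nlinarith [hu.1, ht.2]⟩
    have := hc.map_add_map_reflect_le hus ht (mul_le_mul_of_nonneg_left hst hu.1)
      (mul_le_of_le_one_left ht.1 hu.2)
    linarith [hg hs hy hsy]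
  have := integral_mono_on zero_le_one
    ((intervalIntegrable_comp_mul hg ht).sub intervalIntegrable_const)
    ((intervalIntegrable_comp_mul hg hs).sub intervalIntegrable_const) key
  rw [integral_sub (intervalIntegrable_comp_mul hg ht) intervalIntegrable_const,
    integral_sub (intervalIntegrable_comp_mul hg hs) intervalIntegrable_const] at this
  simp only [integral_const, sub_zero, one_smul] at this
  linarith

end Average

section Majorant

variable {R : ℝ} {f f' : ℝ → ℝ}

theorem div_eq_integral_comp_mul (hder : ∀ s ∈ Ico 0 R, HasDerivAt f (f' s) s)
    (hmono : MonotoneOn f' (Ico 0 R)) (h0 : f 0 = 0) {t : ℝ} (ht : t ∈ Ioo 0 R) :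
    f t / t = ∫ u in (0 : ℝ)..1, f' (u * t) := by
  have hsub : uIcc 0 t ⊆ Ico 0 R := by
    rw [uIcc_of_le ht.1.le]
    exact fun x hx => ⟨hx.1, hx.2.trans_lt ht.2⟩
  rw [integral_comp_mul_right f' ht.1.ne', zero_mul, one_mul, integral_eq_sub_of_hasDerivAt
    (fun x hx => hder x (hsub hx)) (hmono.mono hsub).intervalIntegrable, h0, sub_zero,
    smul_eq_mul, div_eq_inv_mul]

theorem sub_div_mem_Icc (hder : ∀ s ∈ Ico 0 R, HasDerivAt f (f' s) s)
    (hmono : MonotoneOn f' (Ico 0 R)) (h0 : f 0 = 0) {t : ℝ} (ht : t ∈ Ioo 0 R) :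
    f' t - f t / t ∈ Icc 0 (f' t - f' 0) := by
  have := integral_comp_mul_mem_Icc hmono (Ioo_subset_Ico_self ht)
  rw [← div_eq_integral_comp_mul hder hmono h0 ht] at this
  constructor <;> linarith [this.1, this.2]

theorem monotoneOn_sub_div (hder : ∀ s ∈ Ico 0 R, HasDerivAt f (f' s) s)
    (hconv : ConvexOn ℝ (Ico 0 R) f') (hmono : MonotoneOn f' (Ico 0 R)) (h0 : f 0 = 0) :
    MonotoneOn (fun t => f' t - f t / t) (Ioo 0 R) :=
  ((monotoneOn_sub_integral_comp_mul hconv hmono).mono Ioo_subset_Ico_self).congr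
    fun t ht => by simp only [div_eq_integral_comp_mul hder hmono h0 ht]

noncomputable def majorantRatio (f f' : ℝ → ℝ) (c β κ t : ℝ) : ℝ :=
  ((f' t + 1 + κ) * (t * f' t - f t + c * β * (1 + Real.sqrt 2) * (f' t + 1))
    + c * β * (f' t + 1)) / (t * (f' t) ^ 2)

theorem majorantRatio_eq {c β κ t : ℝ} (ht : t ≠ 0) (hf' : f' t ≠ 0) :
    majorantRatio f f' c β κ t =
      ((f' t + 1 + κ) * ((f' t - f t / t) + c * β * (1 + Real.sqrt 2) * ((f' t + 1) / t))
        + c * β * ((f' t + 1) / t)) / (f' t) ^ 2 := by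
  unfold majorantRatio
  field_simp

theorem monotoneOn_majorantRatio (hder : ∀ s ∈ Ico 0 R, HasDerivAt f (f' s) s)
    (hconv : ConvexOn ℝ (Ico 0 R) f') (hmono : MonotoneOn f' (Ico 0 R)) (h0 : f 0 = 0)
    (h0' : f' 0 = -1) {c β κ : ℝ} (hcβ : 0 ≤ c * β) (hκ : 0 ≤ κ) {I : Set ℝ}
    (hI : I ⊆ Ioo 0 R) (hneg : ∀ t ∈ I, f' t < 0) :
    MonotoneOn (majorantRatio f f' c β κ) I := by
  have hIco : ∀ t ∈ I, t ∈ Ico 0 R := fun t ht => Ioo_subset_Ico_self (hI ht)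
  have h0R : ∀ t ∈ I, (0 : ℝ) ∈ Ico 0 R := fun t ht =>
    ⟨le_rfl, (hI ht).1.trans (hI ht).2⟩
  have hA : MonotoneOn (fun t => f' t - f t / t) I :=
    (monotoneOn_sub_div hder hconv hmono h0).mono hI
  have hA₀ : ∀ t ∈ I, 0 ≤ f' t - f t / t := fun t ht =>
    (sub_div_mem_Icc hder hmono h0 (hI ht)).1
  have hf'₁ : ∀ t ∈ I, 0 ≤ f' t + 1 := fun t ht => by
    linarith [hmono (h0R t ht) (hIco t ht) (hI ht).1.le]
  have hB : MonotoneOn (fun t => (f' t + 1) / t) I := fun s hs t ht hst => by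
    simpa [h0'] using hconv.secant_mono (h0R s hs) (hIco s hs) (hIco t ht)
      (hI hs).1.ne' (hI ht).1.ne' hst
  have hB₀ : ∀ t ∈ I, 0 ≤ (f' t + 1) / t := fun t ht =>
    div_nonneg (hf'₁ t ht) (hI ht).1.le
  intro s hs t ht hst
  have hfst : f' s ≤ f' t := hmono (hIco s hs) (hIco t ht) hst
  have hAs := hA₀ s hs
  have hBs := hB₀ s hs
  have hf't := hf'₁ t ht
  rw [majorantRatio_eq (hI hs).1.ne' (hneg s hs).ne,
    majorantRatio_eq (hI ht).1.ne' (hneg t ht).ne]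
  refine div_le_div₀ ?_ ?_ (by nlinarith [hneg t ht]) (by nlinarith [hneg t ht])
  · have hAt := hA₀ t ht
    have hBt := hB₀ t ht
    positivity
  · gcongr (?_ + _ + _) * (?_ + _ * ?_) + _ * ?_
    exacts [hA hs ht hst, hB hs ht hst, hB hs ht hst]

theorem tendsto_majorantRatio (hR : 0 < R) (hder : ∀ s ∈ Ico 0 R, HasDerivAt f (f' s) s)
    (hmono : MonotoneOn f' (Ico 0 R)) (h0 : f 0 = 0) (h0' : f' 0 = -1) {D : ℝ}
    (hD : HasDerivWithinAt f' D (Ici 0) 0) (c β κ : ℝ) :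
    Tendsto (majorantRatio f f' c β κ) (𝓝[>] 0)
      (𝓝 (((1 + Real.sqrt 2) * κ + 1) * c * β * D)) := by
  have hf' : Tendsto f' (𝓝[>] 0) (𝓝 (-1)) :=
    h0' ▸ hD.continuousWithinAt.mono Ioi_subset_Ici_self
  have hB : Tendsto (fun t => (f' t + 1) / t) (𝓝[>] 0) (𝓝 D) := by
    refine ((hasDerivWithinAt_iff_tendsto_slope' self_notMem_Ioi).1 hD.Ioi_of_Ici).congr
      fun t => ?_
    rw [slope_def_field, h0', sub_zero, sub_neg_eq_add]
  have hA : Tendsto (fun t => f' t - f t / t) (𝓝[>] 0) (𝓝 0) := by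
    have hup : Tendsto (fun t => f' t - f' 0) (𝓝[>] 0) (𝓝 0) := by
      simpa [h0'] using hf'.add_const 1
    refine tendsto_of_tendsto_of_tendsto_of_le_of_le' tendsto_const_nhds hup ?_ ?_ <;>
      filter_upwards [Ioo_mem_nhdsGT hR] with t ht
    exacts [(sub_div_mem_Icc hder hmono h0 ht).1, (sub_div_mem_Icc hder hmono h0 ht).2]
  have hlim := ((((hf'.add_const 1).add_const κ).mul
    (hA.add (hB.const_mul (c * β * (1 + Real.sqrt 2))))).add (hB.const_mul (c * β))).div
    (hf'.pow 2) (by norm_num)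
  convert hlim.congr' ?_ using 2
  · ring
  · filter_upwards [self_mem_nhdsWithin, hf'.eventually_ne (by norm_num : (-1 : ℝ) ≠ 0)]
      with t ht hft
    exact (majorantRatio_eq (ne_of_gt ht) hft).symm

end Majorant

theorem stmt_9_general (R : ℝ) (hR : 0 < R) (f f' : ℝ → ℝ)
    (hder : ∀ s ∈ Set.Ico 0 R, HasDerivAt f (f' s) s)
    (h1₀ : f 0 = 0) (h1₁ : f' 0 = -1)
    (h2₀ : ConvexOn ℝ (Set.Ico 0 R) f')
    (h2₁ : StrictMonoOn f' (Set.Ico 0 R))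
    (c β κ : ℝ) (hc : 0 ≤ c) (hβ : 0 < β) (hκ : 0 ≤ κ)
    (D : ℝ) (hD : HasDerivWithinAt f' D (Set.Ici 0) 0)
    (h3 : ((1 + Real.sqrt 2) * κ + 1) * c * β * D < 1)
    (ν ρ : ℝ) (hν : ν = sSup {t | t ∈ Set.Ico 0 R ∧ f' t < 0})
    (hρ : ρ = sSup {t | t ∈ Set.Ioo 0 ν ∧
      ((f' t + 1 + κ) * (t * f' t - f t + c * β * (1 + Real.sqrt 2) * (f' t + 1))
          + c * β * (f' t + 1)) / (t * (f' t) ^ 2) < 1}) :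
    0 < ρ ∧ ∀ t ∈ Set.Ioo 0 ρ,
      ((f' t + 1 + κ) * (t * f' t - f t + c * β * (1 + Real.sqrt 2) * (f' t + 1))
          + c * β * (f' t + 1)) / (t * (f' t) ^ 2) < 1 := by
  have hmono := h2₁.monotoneOn
  have hneg_ne : {t | t ∈ Ico 0 R ∧ f' t < 0}.Nonempty := ⟨0, ⟨le_rfl, hR⟩, by linarith⟩
  have hνR : ν ≤ R := hν ▸ csSup_le hneg_ne fun t ht => ht.1.2.le
  have hν₀ : 0 < ν := by
    have hf'₀ : ∀ᶠ t in 𝓝[>] 0, f' t < 0 :=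
      (hD.continuousWithinAt.mono Ioi_subset_Ici_self).eventually_lt_const (by linarith)
    obtain ⟨t, ht, hft⟩ := ((eventually_mem_set.2 (Ioo_mem_nhdsGT hR)).and hf'₀).exists
    exact hν ▸ ht.1.trans_le
      (le_csSup ⟨R, fun x hx => hx.1.2.le⟩ ⟨Ioo_subset_Ico_self ht, hft⟩)
  have hsub : Ioo 0 ν ⊆ Ioo 0 R := Ioo_subset_Ioo_right hνR
  have hneg : ∀ t ∈ Ioo 0 ν, f' t < 0 := fun t ht =>
    hmono.lt_of_lt_csSup_setOf_lt hneg_ne (Ioo_subset_Ico_self (hsub ht)) (hν ▸ ht.2)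
  have hQ : MonotoneOn (majorantRatio f f' c β κ) (Ioo 0 ν) :=
    monotoneOn_majorantRatio hder h2₀ hmono h1₀ h1₁ (mul_nonneg hc hβ.le) hκ hsub hneg
  have hQ₀ : ∀ᶠ t in 𝓝[>] 0, majorantRatio f f' c β κ t < 1 :=
    (tendsto_majorantRatio hR hder hmono h1₀ h1₁ hD c β κ).eventually_lt_const h3
  obtain ⟨t₀, ht₀⟩ : {t | t ∈ Ioo 0 ν ∧ majorantRatio f f' c β κ t < 1}.Nonempty :=
    ((eventually_mem_set.2 (Ioo_mem_nhdsGT hν₀)).and hQ₀).exists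
  have hρν : ρ ≤ ν := hρ ▸ csSup_le ⟨t₀, ht₀⟩ fun t ht => ht.1.2.le
  exact ⟨hρ ▸ ht₀.1.1.trans_le (le_csSup ⟨ν, fun t ht => ht.1.2.le⟩ ht₀), fun t ht =>
    hQ.lt_of_lt_csSup_setOf_lt ⟨t₀, ht₀⟩ ⟨ht.1, ht.2.trans_le hρν⟩ (hρ ▸ ht.2)⟩

/-- Under the majorant hypotheses (h1), (h2) and the residual condition (h3),
the constant `ρ` is positive and the displayed inequality holds on `(0, ρ)`. -/
theorem stmt_9 (R : ℝ) (hR : 0 < R) (f f' : ℝ → ℝ)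
    (hder : ∀ s ∈ Set.Ico 0 R, HasDerivAt f (f' s) s)
    (hcont : ContinuousOn f' (Set.Ico 0 R))
    (h1₀ : f 0 = 0) (h1₁ : f' 0 = -1)
    (h2₀ : ConvexOn ℝ (Set.Ico 0 R) f')
    (h2₁ : StrictMonoOn f' (Set.Ico 0 R))
    (c β κ : ℝ) (hc : 0 ≤ c) (hβ : 0 < β) (hκ : 0 ≤ κ)
    (D : ℝ) (hD : HasDerivWithinAt f' D (Set.Ici 0) 0)
    (h3 : ((1 + Real.sqrt 2) * κ + 1) * c * β * D < 1)
    (ν ρ : ℝ) (hν : ν = sSup {t | t ∈ Set.Ico 0 R ∧ f' t < 0})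
    (hρ : ρ = sSup {t | t ∈ Set.Ioo 0 ν ∧
      ((f' t + 1 + κ) * (t * f' t - f t + c * β * (1 + Real.sqrt 2) * (f' t + 1))
          + c * β * (f' t + 1)) / (t * (f' t) ^ 2) < 1}) :
    0 < ρ ∧ ∀ t ∈ Set.Ioo 0 ρ,
      ((f' t + 1 + κ) * (t * f' t - f t + c * β * (1 + Real.sqrt 2) * (f' t + 1))
          + c * β * (f' t + 1)) / (t * (f' t) ^ 2) < 1 :=
  stmt_9_general R hR f f' hder h1₀ h1₁ h2₀ h2₁ c β κ hc hβ hκ D hD h3 ν ρ hν hρ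
end

section
/- Let A, B be bounded linear operators between Hilbert spaces X and Y with closed images. If A is injective and ‖A†‖·‖A−B‖ < 1, then B is injective and ‖B†‖ ≤ ‖A†‖/(1 − ‖A†‖·‖A−B‖), where † denotes the Moore-Penrose inverse. -/
open ContinuousLinearMap RealInnerProductSpace

/-- `Ad` is the Moore–Penrose inverse of `A`. -/
def IsMoorePenroseInverse {X Y : Type*}
    [NormedAddCommGroup X] [InnerProductSpace ℝ X] [CompleteSpace X]
    [NormedAddCommGroup Y] [InnerProductSpace ℝ Y] [CompleteSpace Y]
    (A : X →L[ℝ] Y) (Ad : Y →L[ℝ] X) : Prop :=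
  A ∘L Ad ∘L A = A ∧ Ad ∘L A ∘L Ad = Ad ∧
    adjoint (A ∘L Ad) = A ∘L Ad ∧ adjoint (Ad ∘L A) = Ad ∘L A

/-- If `A` is injective with closed image and `‖A†‖·‖A-B‖ < 1`, then `B` is
injective and `‖B†‖ ≤ ‖A†‖ / (1 - ‖A†‖·‖A-B‖)`. -/
theorem stmt_10 {X Y : Type*}
    [NormedAddCommGroup X] [InnerProductSpace ℝ X] [CompleteSpace X]
    [NormedAddCommGroup Y] [InnerProductSpace ℝ Y] [CompleteSpace Y]
    (A B : X →L[ℝ] Y) (Ad Bd : Y →L[ℝ] X)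
    (hAim : IsClosed (Set.range A)) (hBim : IsClosed (Set.range B))
    (hAd : IsMoorePenroseInverse A Ad) (hBd : IsMoorePenroseInverse B Bd)
    (hAinj : Function.Injective A)
    (h : ‖Ad‖ * ‖A - B‖ < 1) :
    Function.Injective B ∧ ‖Bd‖ ≤ ‖Ad‖ / (1 - ‖Ad‖ * ‖A - B‖) := by
  obtain ⟨hA1, hA2, hA3, hA4⟩ := hAd
  obtain ⟨hB1, hB2, hB3, hB4⟩ := hBd
  have h1q : 0 < 1 - ‖Ad‖ * ‖A - B‖ := by linarith
  -- A† A = id, since A is injective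
  have hAdA : ∀ x, Ad (A x) = x := by
    intro x
    apply hAinj
    have := DFunLike.congr_fun hA1 x
    simpa [comp_apply] using this
  -- the key inequality
  have key : ∀ x : X, (1 - ‖Ad‖ * ‖A - B‖) * ‖x‖ ≤ ‖Ad‖ * ‖B x‖ := by
    intro x
    have h1 : ‖x‖ = ‖Ad (A x)‖ := by rw [hAdA]
    have h2 : ‖Ad (A x)‖ ≤ ‖Ad‖ * ‖A x‖ := le_opNorm _ _
    have h3 : ‖A x‖ ≤ ‖B x‖ + ‖(A - B) x‖ := by
      have hABx : A x = B x + (A - B) x := by simp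
      rw [hABx]; exact norm_add_le _ _
    have h4 : ‖(A - B) x‖ ≤ ‖A - B‖ * ‖x‖ := le_opNorm _ _
    have h5 := mul_le_mul_of_nonneg_left h3 (norm_nonneg Ad)
    have h6 := mul_le_mul_of_nonneg_left h4 (norm_nonneg Ad)
    rw [mul_add] at h5
    have hr : (‖Ad‖ * ‖A - B‖) * ‖x‖ = ‖Ad‖ * (‖A - B‖ * ‖x‖) := mul_assoc _ _ _
    linarith [h5, h6, hr, h1, h2]
  -- injectivity of B
  have hBinj : Function.Injective B := by
    intro x y hxy
    have hz : B (x - y) = 0 := by rw [map_sub, hxy, sub_self]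
    have hk := key (x - y)
    rw [hz, norm_zero, mul_zero] at hk
    have hxy0 : ‖x - y‖ ≤ 0 := by nlinarith [norm_nonneg (x - y)]
    exact sub_eq_zero.mp (norm_eq_zero.mp (le_antisymm hxy0 (norm_nonneg _)))
  refine ⟨hBinj, ?_⟩
  -- B B† is an orthogonal projection, hence norm ≤ 1
  have hproj : ∀ y : Y, ‖(B ∘L Bd) y‖ ≤ ‖y‖ := by
    intro y
    set P : Y →L[ℝ] Y := B ∘L Bd with hP
    have hPP : P (P y) = P y := by
      have := DFunLike.congr_fun hB1 (Bd y)
      simpa [hP, comp_apply] using this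
    have h5 : ‖P y‖ ^ 2 ≤ ‖y‖ * ‖P y‖ := by
      have e1 : (‖P y‖ : ℝ) ^ 2 = ⟪P y, P y⟫ := (real_inner_self_eq_norm_sq _).symm
      have e2 : ⟪P y, P y⟫ = ⟪y, P y⟫ := by
        calc ⟪P y, P y⟫ = ⟪adjoint P y, P y⟫ := by rw [hB3]
          _ = ⟪y, P (P y)⟫ := adjoint_inner_left _ _ _
          _ = ⟪y, P y⟫ := by rw [hPP]
      rw [e1, e2]
      exact real_inner_le_norm _ _
    rw [pow_two] at h5
    rcases (norm_nonneg (P y)).eq_or_lt with h0 | h0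
    · rw [← h0]; exact norm_nonneg y
    · exact le_of_mul_le_mul_right h5 h0
  -- conclude the norm bound
  apply opNorm_le_bound
  · positivity
  · intro y
    have hk := key (Bd y)
    have hBBd : B (Bd y) = (B ∘L Bd) y := rfl
    have hp := hproj y
    rw [div_mul_eq_mul_div, le_div_iff₀ h1q]
    have h6 : ‖Ad‖ * ‖B (Bd y)‖ ≤ ‖Ad‖ * ‖y‖ := by
      rw [hBBd]
      exact mul_le_mul_of_nonneg_left hp (norm_nonneg Ad)
    linarith [hk, h6]
end

section
/- Let f(t) = Lt²/2 − t on [0,δ) with L>0. Then f(0)=0, f'(0)=−1, f' is convex and strictly increasing, ν := sup{t: f'(t)<0} = 1/L, and given constants c≥0, β>0, κ≥0 with h := [(1+√2)κ+1]cβL < 1, the constant ρ := sup{t∈(0,ν): ([f'(t)+1+κ][tf'(t)−f(t)+cβ(1+√2)(f'(t)+1)] + cβ[f'(t)+1])/(t f'(t)²) < 1} equals (4+κ+2c(1+√2)βL − √((4+κ+2c(1+√2)βL)² − 8(1−h)))/(2L). -/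
private lemma quad_iff (B w s h0 : ℝ) (hw : 0 ≤ w) (hw2 : w ^ 2 = B ^ 2 - 8 * (1 - h0))
    (hB : 4 ≤ B) (hs1 : s < 1) :
    (0 < s ^ 2 - B * s + 2 * (1 - h0)) ↔ s < (B - w) / 2 := by
  constructor
  · intro hq
    by_contra hcon
    push_neg at hcon
    have h1 : 0 ≤ 2 * s - B + w := by linarith
    have h2 : 0 < B + w - 2 * s := by linarith
    nlinarith [mul_nonneg h1 h2.le]
  · intro hlt
    have h1 : 0 < B - 2 * s - w := by linarith
    have h2 : 0 < B - 2 * s + w := by linarith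
    nlinarith [mul_pos h1 h2]

set_option maxHeartbeats 1000000 in
/-- For the Lipschitz majorant function `f(t) = L t²/2 - t` one has `f(0)=0`,
`f'(0)=-1`, `f'` convex and strictly increasing, `ν = 1/L`, and the radius `ρ`
is given by the explicit formula. -/
theorem stmt_15 (L δ c β κ : ℝ) (hL : 0 < L) (hδ : 0 < δ) (hδL : δ ≤ 1 / L)
    (hc : 0 ≤ c) (hβ : 0 < β) (hκ : 0 ≤ κ)
    (hsmall : ((1 + Real.sqrt 2) * κ + 1) * c * β * L < 1)
    (f f' : ℝ → ℝ) (hf : ∀ t, f t = L * t ^ 2 / 2 - t)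
    (hf' : ∀ t, f' t = L * t - 1) :
    f 0 = 0 ∧ f' 0 = -1 ∧ (∀ t, HasDerivAt f (f' t) t) ∧
      ConvexOn ℝ (Set.Ico 0 δ) f' ∧ StrictMonoOn f' (Set.Ico 0 δ) ∧
      sSup {t : ℝ | 0 ≤ t ∧ f' t < 0} = 1 / L ∧
      sSup {t | t ∈ Set.Ioo 0 (1 / L) ∧
          ((f' t + 1 + κ) * (t * f' t - f t + c * β * (1 + Real.sqrt 2) * (f' t + 1))
              + c * β * (f' t + 1)) / (t * (f' t) ^ 2) < 1} =
        (4 + κ + 2 * c * (1 + Real.sqrt 2) * β * L -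
            Real.sqrt ((4 + κ + 2 * c * (1 + Real.sqrt 2) * β * L) ^ 2 -
              8 * (1 - ((1 + Real.sqrt 2) * κ + 1) * c * β * L))) / (2 * L) := by
  have hfe : f = fun t => L * t ^ 2 / 2 - t := funext hf
  have hfe' : f' = fun t => L * t - 1 := funext hf'
  subst hfe hfe'
  have hs2 : (0:ℝ) ≤ Real.sqrt 2 := Real.sqrt_nonneg 2
  refine ⟨by norm_num, by norm_num, ?_, ?_, ?_, ?_, ?_⟩
  · -- derivative
    intro t
    have h1 : HasDerivAt (fun t : ℝ => L * t ^ 2 / 2 - t)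
        (L * (↑2 * t ^ (2 - 1)) / 2 - 1) t :=
      (((hasDerivAt_pow 2 t).const_mul L).div_const 2).sub (hasDerivAt_id t)
    convert h1 using 1
    push_cast
    ring
  · -- convexity
    refine ⟨convex_Ico _ _, ?_⟩
    intro x _ y _ a b ha hb hab
    simp only [smul_eq_mul]
    have : L * (a * x + b * y) - 1 = a * (L * x - 1) + b * (L * y - 1) := by
      linear_combination hab
    exact le_of_eq this
  · -- strict mono
    intro x _ y _ hxy
    simp only
    have := mul_lt_mul_of_pos_left hxy hL
    linarith
  · -- ν = 1/L
    have hset : {t : ℝ | 0 ≤ t ∧ L * t - 1 < 0} = Set.Ico 0 (1 / L) := by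
      ext u
      simp only [Set.mem_setOf_eq, Set.mem_Ico]
      refine and_congr_right fun _ => ?_
      rw [lt_div_iff₀ hL]
      constructor <;> intro <;> linarith
    rw [hset]
    exact csSup_Ico (by positivity)
  · -- the main radius formula
    set h0 : ℝ := ((1 + Real.sqrt 2) * κ + 1) * c * β * L with hh0def
    set B : ℝ := 4 + κ + 2 * c * (1 + Real.sqrt 2) * β * L with hBdef
    have hh0 : 0 ≤ h0 := by
      rw [hh0def]
      have : (0:ℝ) ≤ (1 + Real.sqrt 2) * κ + 1 := by nlinarith
      positivity
    have hB4 : 4 ≤ B := by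
      rw [hBdef]
      nlinarith [mul_nonneg (mul_nonneg (mul_nonneg hc (by linarith : (0:ℝ) ≤ 1 + Real.sqrt 2)) hβ.le) hL.le]
    have hDnn : (0:ℝ) ≤ B ^ 2 - 8 * (1 - h0) := by nlinarith
    set w : ℝ := Real.sqrt (B ^ 2 - 8 * (1 - h0)) with hwdef
    have hw : 0 ≤ w := Real.sqrt_nonneg _
    have hw2 : w ^ 2 = B ^ 2 - 8 * (1 - h0) := Real.sq_sqrt hDnn
    have hwB : w < B := by nlinarith
    have hBw2 : B - 2 < w := by nlinarith
    have hρpos : 0 < (B - w) / (2 * L) := by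
      apply div_pos (by linarith) (by positivity)
    have hρlt : (B - w) / (2 * L) < 1 / L := by
      rw [div_lt_div_iff₀ (by positivity) hL]
      nlinarith
    have hset : {t : ℝ | t ∈ Set.Ioo 0 (1 / L) ∧
        ((L * t - 1 + 1 + κ) * (t * (L * t - 1) - (L * t ^ 2 / 2 - t)
            + c * β * (1 + Real.sqrt 2) * (L * t - 1 + 1))
          + c * β * (L * t - 1 + 1)) / (t * (L * t - 1) ^ 2) < 1}
        = Set.Ioo 0 ((B - w) / (2 * L)) := by
      ext t
      simp only [Set.mem_setOf_eq, Set.mem_Ioo]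
      have hiff : ∀ (ht0 : 0 < t) (ht1 : t < 1 / L),
          (((L * t - 1 + 1 + κ) * (t * (L * t - 1) - (L * t ^ 2 / 2 - t)
              + c * β * (1 + Real.sqrt 2) * (L * t - 1 + 1))
            + c * β * (L * t - 1 + 1)) / (t * (L * t - 1) ^ 2) < 1
            ↔ t < (B - w) / (2 * L)) := by
        intro ht0 ht1
        have hLt1 : L * t < 1 := by
          have := (lt_div_iff₀ hL).mp ht1; linarith
        have hneg : L * t - 1 < 0 := by linarith
        have hsq : 0 < (L * t - 1) ^ 2 := by nlinarith
        have hden : 0 < t * (L * t - 1) ^ 2 := mul_pos ht0 hsq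
        rw [div_lt_one hden]
        have key : t * (L * t - 1) ^ 2 -
            ((L * t - 1 + 1 + κ) * (t * (L * t - 1) - (L * t ^ 2 / 2 - t)
                + c * β * (1 + Real.sqrt 2) * (L * t - 1 + 1))
              + c * β * (L * t - 1 + 1))
            = t / 2 * ((L * t) ^ 2 - B * (L * t) + 2 * (1 - h0)) := by
          rw [hBdef, hh0def]; ring
        have hq := quad_iff B w (L * t) h0 hw hw2 hB4 hLt1
        have hconv : t < (B - w) / (2 * L) ↔ L * t < (B - w) / 2 := by
          rw [lt_div_iff₀ (by positivity : (0:ℝ) < 2 * L),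
            lt_div_iff₀ (show (0:ℝ) < 2 by norm_num)]
          constructor <;> intro <;> linarith
        constructor
        · intro hlt
          have hprod : 0 < t / 2 * ((L * t) ^ 2 - B * (L * t) + 2 * (1 - h0)) := by
            linarith [key]
          have hqpos : 0 < (L * t) ^ 2 - B * (L * t) + 2 * (1 - h0) := by
            by_contra h'
            push_neg at h'
            nlinarith [hprod, mul_nonneg ht0.le (neg_nonneg.mpr h')]
          exact hconv.mpr (hq.mp hqpos)
        · intro hlt
          have hqpos := hq.mpr (hconv.mp hlt)
          nlinarith [key, mul_pos (show (0:ℝ) < t / 2 by linarith) hqpos]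
      constructor
      · rintro ⟨⟨ht0, ht1⟩, hlt⟩
        exact ⟨ht0, (hiff ht0 ht1).mp hlt⟩
      · rintro ⟨ht0, htρ⟩
        have ht1 : t < 1 / L := lt_trans htρ hρlt
        exact ⟨⟨ht0, ht1⟩, (hiff ht0 ht1).mpr htρ⟩
    rw [hset]
    exact csSup_Ioo hρpos
end

section
/- Let F:Ω→Y be continuously differentiable on an open set Ω of a Hilbert space X containing the segment from x* to x, and suppose β‖F'(y) − F'(x*+τ(y−x*))‖ ≤ f'(‖y−x*‖) − f'(τ‖y−x*‖) for all τ∈[0,1] and y in the ball B(x*,δ), where f:[0,R)→ℝ is continuously differentiable. Then for x ∈ B(x*,δ), β‖F(x*) − F(x) − F'(x)(x*−x)‖ ≤ f(0) − f(‖x−x*‖) + f'(‖x−x*‖)‖x−x*‖. -/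
/-!
Along the segment `p τ = x* + τ (x - x*)`, the curve `g τ = β (F (p τ) - τ F'(x) (x - x*))`
satisfies `‖g'(τ)‖ ≤ β ‖F'(x) - F'(p τ)‖ ‖x - x*‖ ≤ (f'(t) - f'(τ t)) t` with `t = ‖x - x*‖`,
by the majorant condition at `y = x`; the right-hand side is the derivative of
`φ τ = f'(t) t τ - f(τ t)`. The mean value inequality with majorant `φ` on `[0, 1]` bounds
`‖g 1 - g 0‖ = β ‖E_F(x, x*)‖` by `φ 1 - φ 0 = e_f(t, 0)`.
-/

open Set

theorem norm_sub_le_sub_of_norm_deriv_le_deriv {E : Type*} [NormedAddCommGroup E]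
    [NormedSpace ℝ E] {g g' : ℝ → E} {φ φ' : ℝ → ℝ} {a b : ℝ} (hab : a ≤ b)
    (hg : ∀ σ ∈ Icc a b, HasDerivAt g (g' σ) σ) (hφ : ∀ σ ∈ Icc a b, HasDerivAt φ (φ' σ) σ)
    (bound : ∀ σ ∈ Ico a b, ‖g' σ‖ ≤ φ' σ) :
    ‖g b - g a‖ ≤ φ b - φ a :=
  image_norm_le_of_norm_deriv_right_le_deriv_boundary' (f := fun σ => g σ - g a)
    (B := fun σ => φ σ - φ a)
    (fun σ hσ => ((hg σ hσ).sub_const _).continuousAt.continuousWithinAt)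
    (fun σ hσ => ((hg σ (Ico_subset_Icc_self hσ)).sub_const _).hasDerivWithinAt)
    (by simp)
    (fun σ hσ => ((hφ σ hσ).sub_const _).continuousAt.continuousWithinAt)
    (fun σ hσ => ((hφ σ (Ico_subset_Icc_self hσ)).sub_const _).hasDerivWithinAt)
    bound (right_mem_Icc.mpr hab)

theorem HasFDerivAt.hasDerivAt_comp_add_smul_sub_smul {E G : Type*}
    [NormedAddCommGroup E] [NormedSpace ℝ E] [NormedAddCommGroup G] [NormedSpace ℝ G]
    {F : E → G} {F' : E →L[ℝ] G} {a v : E} {τ : ℝ} (hF : HasFDerivAt F F' (a + τ • v))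
    (L : E →L[ℝ] G) :
    HasDerivAt (fun σ : ℝ => F (a + σ • v) - σ • L v) (F' v - L v) τ := by
  have hline : HasDerivAt (fun σ : ℝ => a + σ • v) v τ := by
    simpa using ((hasDerivAt_id τ).smul_const v).const_add a
  exact (hF.comp_hasDerivAt τ hline).sub (by simpa using (hasDerivAt_id τ).smul_const (L v))

theorem HasDerivAt.hasDerivAt_mul_sub_comp_mul {f : ℝ → ℝ} {f' c t τ : ℝ}
    (hf : HasDerivAt f f' (τ * t)) :
    HasDerivAt (fun σ => c * t * σ - f (σ * t)) ((c - f') * t) τ :=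
  (((hasDerivAt_id τ).const_mul (c * t)).sub
    (hf.comp τ ((hasDerivAt_id τ).mul_const t))).congr_deriv (by ring)

theorem stmt_17_general {X Y : Type*}
    [NormedAddCommGroup X] [InnerProductSpace ℝ X]
    [NormedAddCommGroup Y] [InnerProductSpace ℝ Y]
    (Ω : Set X)
    (F : X → Y) (F' : X → X →L[ℝ] Y)
    (hF : ∀ y ∈ Ω, HasFDerivAt F (F' y) y)
    (xs : X)
    (β δ R : ℝ) (hβ : 0 < β) (hδR : δ ≤ R)
    (hball : Metric.ball xs δ ⊆ Ω)
    (f f' : ℝ → ℝ) (hf : ∀ s ∈ Set.Ico 0 R, HasDerivAt f (f' s) s)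
    (hmaj : ∀ y ∈ Metric.ball xs δ, ∀ τ ∈ Set.Icc (0 : ℝ) 1,
      β * ‖F' y - F' (xs + τ • (y - xs))‖ ≤ f' ‖y - xs‖ - f' (τ * ‖y - xs‖))
    (x : X) (hx : x ∈ Metric.ball xs δ) :
    β * ‖F xs - F x - F' x (xs - x)‖ ≤
      f 0 - f ‖x - xs‖ + f' ‖x - xs‖ * ‖x - xs‖ := by
  set t := ‖x - xs‖
  set p : ℝ → X := fun τ => xs + τ • (x - xs)
  have hpΩ (τ : ℝ) (hτ : τ ∈ Icc (0 : ℝ) 1) : p τ ∈ Ω :=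
    hball <| (convex_ball xs δ).add_smul_sub_mem
      (Metric.mem_ball_self (Metric.pos_of_mem_ball hx)) hx hτ
  have hτt (τ : ℝ) (hτ : τ ∈ Icc (0 : ℝ) 1) : τ * t ∈ Ico 0 R :=
    ⟨mul_nonneg hτ.1 (norm_nonneg _), (mul_le_of_le_one_left (norm_nonneg _) hτ.2).trans_lt
      ((mem_ball_iff_norm.mp hx).trans_le hδR)⟩
  have bound (τ : ℝ) (hτ : τ ∈ Ico (0 : ℝ) 1) :
      ‖β • (F' (p τ) (x - xs) - F' x (x - xs))‖ ≤ (f' t - f' (τ * t)) * t := calc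
    _ = β * ‖(F' x - F' (p τ)) (x - xs)‖ := by
      rw [norm_smul, Real.norm_of_nonneg hβ.le, ← norm_neg]; simp
    _ ≤ β * ‖F' x - F' (p τ)‖ * t := by
      rw [mul_assoc]; exact mul_le_mul_of_nonneg_left (ContinuousLinearMap.le_opNorm _ _) hβ.le
    _ ≤ (f' t - f' (τ * t)) * t :=
      mul_le_mul_of_nonneg_right (hmaj x hx τ (Ico_subset_Icc_self hτ)) (norm_nonneg _)
  have key := norm_sub_le_sub_of_norm_deriv_le_deriv zero_le_one
    (fun τ hτ => ((hF _ (hpΩ τ hτ)).hasDerivAt_comp_add_smul_sub_smul (F' x)).const_smul β)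
    (fun τ hτ => (hf _ (hτt τ hτ)).hasDerivAt_mul_sub_comp_mul (c := f' t)) bound
  convert key using 1
  · rw [Pi.smul_apply, Pi.smul_apply, ← smul_sub, norm_smul, Real.norm_of_nonneg hβ.le, ← norm_neg]
    congr 2
    simp only [map_sub, neg_sub, one_smul, add_sub_cancel, zero_smul, add_zero, sub_zero]
    abel
  · simp only [mul_one, one_mul, mul_zero, zero_mul, zero_sub, sub_neg_eq_add]
    ring

/-- Under the majorant condition, the linearization error of `F` at `x ∈ B(x*, δ)`
is bounded by the linearization error of the majorant function:
`β ‖E_F(x, x*)‖ ≤ e_f(‖x - x*‖, 0) = f(0) - f(‖x-x*‖) + f'(‖x-x*‖)‖x-x*‖`. -/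
theorem stmt_17 {X Y : Type*}
    [NormedAddCommGroup X] [InnerProductSpace ℝ X] [CompleteSpace X]
    [NormedAddCommGroup Y] [InnerProductSpace ℝ Y] [CompleteSpace Y]
    (Ω : Set X) (hΩ : IsOpen Ω)
    (F : X → Y) (F' : X → X →L[ℝ] Y)
    (hF : ∀ y ∈ Ω, HasFDerivAt F (F' y) y) (hFc : ContinuousOn F' Ω)
    (xs : X) (hxs : xs ∈ Ω)
    (β δ R : ℝ) (hβ : 0 < β) (hδ : 0 < δ) (hδR : δ ≤ R)
    (hball : Metric.ball xs δ ⊆ Ω)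
    (f f' : ℝ → ℝ) (hf : ∀ s ∈ Set.Ico 0 R, HasDerivAt f (f' s) s)
    (hf'c : ContinuousOn f' (Set.Ico 0 R))
    (hmaj : ∀ y ∈ Metric.ball xs δ, ∀ τ ∈ Set.Icc (0 : ℝ) 1,
      β * ‖F' y - F' (xs + τ • (y - xs))‖ ≤ f' ‖y - xs‖ - f' (τ * ‖y - xs‖))
    (x : X) (hx : x ∈ Metric.ball xs δ) :
    β * ‖F xs - F x - F' x (xs - x)‖ ≤
      f 0 - f ‖x - xs‖ + f' ‖x - xs‖ * ‖x - xs‖ :=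
  stmt_17_general Ω F F' hF xs β δ R hβ hδR hball f f' hf hmaj x hx
end

section
/- Let F:Ω→Y be twice continuously differentiable on an open set Ω, x*∈Ω, β>0, and f:[0,R)→ℝ twice continuously differentiable with β‖F''(x)‖ ≤ f''(‖x−x*‖) for all x∈B(x*,R)∩Ω. If the segment from x* to x lies in Ω, then β‖F'(x) − F'(x*+τ(x−x*))‖ ≤ f'(‖x−x*‖) − f'(τ‖x−x*‖) for all τ∈[0,1]. -/
/-!
Along the segment `t ↦ x* + t (x - x*)` the curve `t ↦ F'(x* + t (x - x*))` has velocity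
`F''(x* + t (x - x*)) (x - x*)`, whose norm is at most `f''(t ‖x - x*‖) ‖x - x*‖ / β`, the
derivative of `t ↦ f'(t ‖x - x*‖) / β`. A mean value inequality with this real majorant,
integrated over `[τ, 1]`, gives the claim.
-/

open Set

theorem norm_sub_le_sub_of_norm_deriv_le {E : Type*} [NormedAddCommGroup E] [NormedSpace ℝ E]
    {g g' : ℝ → E} {φ φ' : ℝ → ℝ} {a b : ℝ} (hab : a ≤ b)
    (hg : ∀ t ∈ Icc a b, HasDerivAt g (g' t) t) (hφ : ∀ t ∈ Icc a b, HasDerivAt φ (φ' t) t)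
    (bound : ∀ t ∈ Ico a b, ‖g' t‖ ≤ φ' t) :
    ‖g b - g a‖ ≤ φ b - φ a := by
  refine image_norm_le_of_norm_deriv_right_le_deriv_boundary'
    (f := fun t => g t - g a) (B := fun t => φ t - φ a) ?_
    (fun t ht => ((hg t (Ico_subset_Icc_self ht)).sub_const _).hasDerivWithinAt) (by simp) ?_
    (fun t ht => ((hφ t (Ico_subset_Icc_self ht)).sub_const _).hasDerivWithinAt)
    bound (right_mem_Icc.2 hab)
  · exact fun t ht => ((hg t ht).continuousAt.sub continuousAt_const).continuousWithinAt
  · exact fun t ht => ((hφ t ht).continuousAt.sub continuousAt_const).continuousWithinAt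

theorem HasFDerivAt.hasDerivAt_comp_add_smul {E G : Type*} [NormedAddCommGroup E]
    [NormedSpace ℝ E] [NormedAddCommGroup G] [NormedSpace ℝ G] {φ : E → G} {φ' : E →L[ℝ] G}
    {a v : E} {t : ℝ} (h : HasFDerivAt φ φ' (a + t • v)) :
    HasDerivAt (fun s : ℝ => φ (a + s • v)) (φ' v) t :=
  h.comp_hasDerivAt t (((hasDerivAt_id t).smul_const v).const_add a |>.congr_deriv (one_smul ℝ v))

theorem stmt_18_general {X Y : Type*}
    [NormedAddCommGroup X] [InnerProductSpace ℝ X]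
    [NormedAddCommGroup Y] [InnerProductSpace ℝ Y]
    (Ω : Set X)
    (F' : X → X →L[ℝ] Y) (F'' : X → X →L[ℝ] X →L[ℝ] Y)
    (hF' : ∀ y ∈ Ω, HasFDerivAt F' (F'' y) y)
    (xs : X)
    (β R : ℝ) (hβ : 0 < β)
    (f' f'' : ℝ → ℝ)
    (hf' : ∀ s ∈ Set.Ico 0 R, HasDerivAt f' (f'' s) s)
    (hbound : ∀ y ∈ Metric.ball xs R ∩ Ω, β * ‖F'' y‖ ≤ f'' ‖y - xs‖)
    (x : X) (hxR : ‖x - xs‖ < R) (hseg : segment ℝ xs x ⊆ Ω) :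
    ∀ τ ∈ Set.Icc (0 : ℝ) 1,
      β * ‖F' x - F' (xs + τ • (x - xs))‖ ≤ f' ‖x - xs‖ - f' (τ * ‖x - xs‖) := by
  intro τ hτ
  set r := ‖x - xs‖
  have hΩ (t : ℝ) (ht : t ∈ Icc τ 1) : xs + t • (x - xs) ∈ Ω :=
    hseg (segment_eq_image' ℝ xs x ▸ ⟨t, ⟨hτ.1.trans ht.1, ht.2⟩, rfl⟩)
  have hdist (t : ℝ) (ht : t ∈ Icc τ 1) : ‖xs + t • (x - xs) - xs‖ = t * r := by
    rw [add_sub_cancel_left, norm_smul, Real.norm_of_nonneg (hτ.1.trans ht.1)]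
  have hradius (t : ℝ) (ht : t ∈ Icc τ 1) : t * r ∈ Ico 0 R :=
    ⟨mul_nonneg (hτ.1.trans ht.1) (norm_nonneg _),
      (mul_le_of_le_one_left (norm_nonneg _) ht.2).trans_lt hxR⟩
  have hvelocity (t : ℝ) (ht : t ∈ Ico τ 1) :
      ‖F'' (xs + t • (x - xs)) (x - xs)‖ ≤ f'' (t * r) * r / β := by
    replace ht := Ico_subset_Icc_self ht
    have hball : xs + t • (x - xs) ∈ Metric.ball xs R := by
      rw [Metric.mem_ball, dist_eq_norm, hdist t ht]; exact (hradius t ht).2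
    have hb := hbound _ ⟨hball, hΩ t ht⟩
    rw [hdist t ht] at hb
    rw [le_div_iff₀ hβ]
    calc ‖F'' (xs + t • (x - xs)) (x - xs)‖ * β ≤ β * ‖F'' (xs + t • (x - xs))‖ * r := by
          rw [mul_comm, mul_assoc]; gcongr; exact (F'' _).le_opNorm _
      _ ≤ f'' (t * r) * r := by gcongr
  have key := norm_sub_le_sub_of_norm_deriv_le hτ.2
    (fun t ht => (hF' _ (hΩ t ht)).hasDerivAt_comp_add_smul)
    (fun t ht => ((hf' _ (hradius t ht)).comp t (hasDerivAt_mul_const r)).div_const β) hvelocity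
  simp only [Function.comp_apply, one_smul, one_mul, add_sub_cancel, ← sub_div] at key
  rwa [le_div_iff₀ hβ, mul_comm] at key

/-- If `β ‖F''(y)‖ ≤ f''(‖y - x*‖)` on `B(x*, R) ∩ Ω` (with `f''` monotone), then
`F` and `f` satisfy the majorant condition
`β ‖F'(x) - F'(x* + τ(x - x*))‖ ≤ f'(‖x - x*‖) - f'(τ ‖x - x*‖)`. -/
theorem stmt_18 {X Y : Type*}
    [NormedAddCommGroup X] [InnerProductSpace ℝ X] [CompleteSpace X]
    [NormedAddCommGroup Y] [InnerProductSpace ℝ Y] [CompleteSpace Y]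
    (Ω : Set X) (hΩ : IsOpen Ω)
    (F : X → Y) (F' : X → X →L[ℝ] Y) (F'' : X → X →L[ℝ] X →L[ℝ] Y)
    (hF : ∀ y ∈ Ω, HasFDerivAt F (F' y) y)
    (hF' : ∀ y ∈ Ω, HasFDerivAt F' (F'' y) y)
    (hF'' : ContinuousOn F'' Ω)
    (xs : X) (hxs : xs ∈ Ω)
    (β R : ℝ) (hβ : 0 < β) (hR : 0 < R)
    (f f' f'' : ℝ → ℝ)
    (hf : ∀ s ∈ Set.Ico 0 R, HasDerivAt f (f' s) s)
    (hf' : ∀ s ∈ Set.Ico 0 R, HasDerivAt f' (f'' s) s)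
    (hf''c : ContinuousOn f'' (Set.Ico 0 R))
    (hf''mono : MonotoneOn f'' (Set.Ico 0 R))
    (hbound : ∀ y ∈ Metric.ball xs R ∩ Ω, β * ‖F'' y‖ ≤ f'' ‖y - xs‖)
    (x : X) (hxR : ‖x - xs‖ < R) (hseg : segment ℝ xs x ⊆ Ω) :
    ∀ τ ∈ Set.Icc (0 : ℝ) 1,
      β * ‖F' x - F' (xs + τ • (x - xs))‖ ≤ f' ‖x - xs‖ - f' (τ * ‖x - xs‖) :=
  stmt_18_general Ω F' F'' hF' xs β R hβ f' f'' hf' hbound x hxR hseg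
end

section
/- Suppose F:Ω→Y is analytic, x*∈Ω, β = ‖F'(x*)†‖, γ := sup_{n>1} (β‖F⁽ⁿ⁾(x*)/n!‖)^{1/(n−1)} < +∞, and B(x*,1/γ) ⊆ Ω. Then for all x ∈ B(x*,1/γ), β‖F''(x)‖ ≤ 2γ/(1 − γ‖x−x*‖)³. -/
/-!
The hypothesis on `γ` says that the Taylor coefficients `qₙ = F⁽ⁿ⁾(x*)/n!` satisfy
`‖qₙ‖ ≤ γⁿ⁻¹/β` for `n ≥ 2`. Hence the Taylor series converges on `B(x*, 1/γ)`, and by the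
identity principle for real-analytic functions it represents `F` on that whole ball.
Re-expanding it around `x`, the second coefficient is `∑ₗ C(l+2, 2) q_{l+2} (x - x*)ˡ`, of norm at
most `(γ/β) ∑ₗ C(l+2, 2) (γ‖x - x*‖)ˡ = (γ/β) / (1 - γ‖x - x*‖)³`; finally `F''(x)` is the
symmetrisation of twice this coefficient, so its norm is at most twice as large.
-/

open scoped Nat NNReal ENNReal
open Filter Equiv Topology

section Taylor

variable {𝕜 E F : Type*} [NormedAddCommGroup E] [NormedAddCommGroup F]

noncomputable def taylorSeries (𝕜 : Type*) [NontriviallyNormedField 𝕜] [NormedSpace 𝕜 E]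
    [NormedSpace 𝕜 F] (f : E → F) (x : E) : FormalMultilinearSeries 𝕜 E F :=
  fun n => (n ! : 𝕜)⁻¹ • iteratedFDeriv 𝕜 n f x

theorem HasFPowerSeriesOnBall.norm_iteratedFDeriv_le [NontriviallyNormedField 𝕜]
    [NormedSpace 𝕜 E] [NormedSpace 𝕜 F] [CompleteSpace F] {p : FormalMultilinearSeries 𝕜 E F}
    {f : E → F} {x : E} {r : ℝ≥0∞} (h : HasFPowerSeriesOnBall f p x r) (n : ℕ) :
    ‖iteratedFDeriv 𝕜 n f x‖ ≤ n ! * ‖p n‖ := by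
  refine ContinuousMultilinearMap.opNorm_le_bound (by positivity) fun v => ?_
  rw [h.iteratedFDeriv_eq_sum_of_completeSpace]
  calc ‖∑ σ : Perm (Fin n), p n (fun i => v (σ i))‖
      ≤ ∑ σ : Perm (Fin n), ‖p n‖ * ∏ i, ‖v (σ i)‖ :=
        norm_sum_le_of_le _ fun σ _ => (p n).le_opNorm _
    _ = ∑ _σ : Perm (Fin n), ‖p n‖ * ∏ i, ‖v i‖ := by
        congr! 2 with σ
        exact Equiv.prod_comp σ fun i => ‖v i‖
    _ = n ! * ‖p n‖ * ∏ i, ‖v i‖ := by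
        simp [Fintype.card_perm, mul_assoc]

variable [RCLike 𝕜] [NormedSpace 𝕜 E] [NormedSpace 𝕜 F]

theorem norm_taylorSeries (f : E → F) (x : E) (n : ℕ) :
    ‖taylorSeries 𝕜 f x n‖ = ‖iteratedFDeriv 𝕜 n f x‖ / n ! := by
  rw [taylorSeries, norm_smul, norm_inv, RCLike.norm_natCast, inv_mul_eq_div]

theorem norm_taylorSeries_le_of_rpow_inv_le {f : E → F} {x : E} {β γ : ℝ} {n : ℕ}
    (hβ : 0 < β) (hγ : 0 < γ) (hn : 1 < n)
    (h : (β * ‖iteratedFDeriv 𝕜 n f x‖ / n !) ^ ((n - 1 : ℝ)⁻¹) ≤ γ) :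
    ‖taylorSeries 𝕜 f x n‖ ≤ (β * γ)⁻¹ * γ ^ n := by
  have hn' : (0 : ℝ) < n - 1 := by
    have : (1 : ℝ) < n := by exact_mod_cast hn
    linarith
  have hle := (Real.rpow_inv_le_iff_of_pos (by positivity) hγ.le hn').1 h
  rw [← Nat.cast_pred (by omega), Real.rpow_natCast, mul_div_assoc, ← le_div_iff₀' hβ] at hle
  rw [norm_taylorSeries]
  refine hle.trans_eq ?_
  rw [← Nat.sub_add_cancel hn.le, pow_succ, Nat.add_sub_cancel]
  field_simp

-- Symmetrising `p n` does not increase its norm, so the Taylor series converges wherever `p` does.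
theorem HasFPowerSeriesOnBall.hasFPowerSeriesOnBall_taylorSeries [CompleteSpace F]
    {p : FormalMultilinearSeries 𝕜 E F} {f : E → F} {x : E} {r : ℝ≥0∞}
    (h : HasFPowerSeriesOnBall f p x r) : HasFPowerSeriesOnBall f (taylorSeries 𝕜 f x) x r where
  r_le := h.r_le.trans <| FormalMultilinearSeries.radius_le_of_le fun n => by
    rw [norm_taylorSeries, div_le_iff₀' (by positivity)]
    exact h.norm_iteratedFDeriv_le n
  r_pos := h.r_pos
  hasSum hy := h.hasSum_iteratedFDeriv hy

end Taylor

section IdentityPrinciple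

variable {E F : Type*} [NormedAddCommGroup E] [NormedSpace ℝ E]
  [NormedAddCommGroup F] [NormedSpace ℝ F] [CompleteSpace F] {f : E → F} {x : E} {r : ℝ≥0∞}

theorem AnalyticOnNhd.hasFPowerSeriesOnBall_of_le_radius {p : FormalMultilinearSeries ℝ E F}
    (hf : AnalyticOnNhd ℝ f (Metric.eball x r)) (hp : HasFPowerSeriesAt f p x)
    (hr : r ≤ p.radius) (hr0 : 0 < r) : HasFPowerSeriesOnBall f p x r := by
  have hsum : HasFPowerSeriesOnBall (fun z => p.sum (z - x)) p x r := by
    simpa using ((p.hasFPowerSeriesOnBall (hr0.trans_le hr)).comp_sub x).mono hr0 hr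
  have hloc : f =ᶠ[𝓝 x] fun z => p.sum (z - x) := by
    filter_upwards [hp.eventually_hasSum_sub, hsum.hasFPowerSeriesAt.eventually_hasSum_sub]
      with z h₁ h₂ using h₁.unique h₂
  refine hsum.congr fun z hz => ?_
  exact (hf.eqOn_of_preconnected_of_eventuallyEq hsum.analyticOnNhd
    Metric.isPreconnected_eball (Metric.mem_eball_self hr0) hloc hz).symm

theorem AnalyticOnNhd.hasFPowerSeriesOnBall_taylorSeries
    (hf : AnalyticOnNhd ℝ f (Metric.eball x r)) (hr : r ≤ (taylorSeries ℝ f x).radius)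
    (hr0 : 0 < r) : HasFPowerSeriesOnBall f (taylorSeries ℝ f x) x r := by
  obtain ⟨p, _, hp⟩ := hf x (Metric.mem_eball_self hr0)
  exact hf.hasFPowerSeriesOnBall_of_le_radius
    hp.hasFPowerSeriesOnBall_taylorSeries.hasFPowerSeriesAt hr hr0

end IdentityPrinciple

namespace FormalMultilinearSeries

variable {𝕜 E F : Type*} [NontriviallyNormedField 𝕜]
  [NormedAddCommGroup E] [NormedSpace 𝕜 E] [NormedAddCommGroup F] [NormedSpace 𝕜 F]
  {p : FormalMultilinearSeries 𝕜 E F} {k : ℕ} {C γ : ℝ}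

theorem ofReal_inv_le_radius_of_norm_le_mul_pow (hp : ∀ n, k ≤ n → ‖p n‖ ≤ C * γ ^ n)
    (hγ : 0 < γ) : ENNReal.ofReal γ⁻¹ ≤ p.radius := by
  refine p.le_radius_of_eventually_le C ?_
  filter_upwards [eventually_ge_atTop k] with n hn
  rw [Real.coe_toNNReal _ (by positivity), inv_pow]
  calc ‖p n‖ * (γ ^ n)⁻¹ ≤ C * γ ^ n * (γ ^ n)⁻¹ := by gcongr; exact hp n hn
    _ = C := by field_simp

theorem norm_changeOriginSeries_le (p : FormalMultilinearSeries 𝕜 E F) (k l : ℕ) :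
    ‖p.changeOriginSeries k l‖ ≤ (k + l).choose l * ‖p (k + l)‖ := by
  have h := p.nnnorm_changeOriginSeries_le_tsum k l
  rw [tsum_fintype, Finset.sum_const, Finset.card_univ, Fintype.card_finset_len,
    Fintype.card_fin, nsmul_eq_mul] at h
  exact_mod_cast h

theorem norm_changeOrigin_le_of_norm_le_mul_pow (hp : ∀ n, k ≤ n → ‖p n‖ ≤ C * γ ^ n)
    (hγ : 0 ≤ γ) {x : E} (hx : γ * ‖x‖ < 1) :
    ‖p.changeOrigin x k‖ ≤ C * γ ^ k / (1 - γ * ‖x‖) ^ (k + 1) := by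
  have hgeom : HasSum (fun l : ℕ => C * γ ^ k * ((l + k).choose k * (γ * ‖x‖) ^ l))
      (C * γ ^ k / (1 - γ * ‖x‖) ^ (k + 1)) := by
    have := (hasSum_choose_mul_geometric_of_norm_lt_one k (r := γ * ‖x‖)
      (by rwa [Real.norm_of_nonneg (by positivity)])).mul_left (C * γ ^ k)
    rwa [← mul_one_div]
  refine tsum_of_norm_bounded hgeom fun l => ?_
  calc ‖p.changeOriginSeries k l fun _ => x‖ ≤ ‖p.changeOriginSeries k l‖ * ‖x‖ ^ l := by
        simpa using (p.changeOriginSeries k l).le_opNorm fun _ => x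
    _ ≤ (k + l).choose l * (C * γ ^ (k + l)) * ‖x‖ ^ l := by
        gcongr
        exact (p.norm_changeOriginSeries_le k l).trans (by gcongr; exact hp _ (by omega))
    _ = C * γ ^ k * ((l + k).choose k * (γ * ‖x‖) ^ l) := by
        rw [add_comm k l, Nat.choose_symm_add]
        ring

end FormalMultilinearSeries

theorem stmt_19_general {X Y : Type*}
    [NormedAddCommGroup X] [InnerProductSpace ℝ X]
    [NormedAddCommGroup Y] [InnerProductSpace ℝ Y] [CompleteSpace Y]
    (Ω : Set X)
    (F : X → Y) (hF : AnalyticOnNhd ℝ F Ω)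
    (xs : X) (β : ℝ) (hβ : 0 < β)
    (γ : ℝ)
    (hbdd : BddAbove (Set.range fun n : {n : ℕ // 1 < n} =>
      (β * ‖iteratedFDeriv ℝ n.1 F xs‖ / (n.1.factorial : ℝ)) ^ ((n.1 - 1 : ℝ)⁻¹)))
    (hγ : γ = ⨆ n : {n : ℕ // 1 < n},
      (β * ‖iteratedFDeriv ℝ n.1 F xs‖ / (n.1.factorial : ℝ)) ^ ((n.1 - 1 : ℝ)⁻¹))
    (hball : Metric.ball xs (1 / γ) ⊆ Ω) :
    ∀ x ∈ Metric.ball xs (1 / γ),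
      β * ‖iteratedFDeriv ℝ 2 F x‖ ≤ 2 * γ / (1 - γ * ‖x - xs‖) ^ 3 := by
  intro x hx
  have hγ0 : 0 < γ := one_div_pos.1 (dist_nonneg.trans_lt hx)
  have hcoeff : ∀ n, 2 ≤ n → ‖taylorSeries ℝ F xs n‖ ≤ (β * γ)⁻¹ * γ ^ n := fun n hn =>
    norm_taylorSeries_le_of_rpow_inv_le hβ hγ0 hn (hγ ▸ le_ciSup hbdd ⟨n, hn⟩)
  have hT : HasFPowerSeriesOnBall F (taylorSeries ℝ F xs) xs (ENNReal.ofReal γ⁻¹) :=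
    (hF.mono (by rwa [Metric.eball_ofReal, ← one_div])).hasFPowerSeriesOnBall_taylorSeries
      (FormalMultilinearSeries.ofReal_inv_le_radius_of_norm_le_mul_pow hcoeff hγ0)
      (by simpa using hγ0)
  have hmem : x ∈ Metric.eball xs (ENNReal.ofReal γ⁻¹) := by
    rwa [Metric.eball_ofReal, ← one_div]
  have hTx := hT.changeOrigin (by rwa [Metric.mem_eball, edist_eq_enorm_sub] at hmem)
  rw [add_sub_cancel] at hTx
  have hγx : γ * ‖x - xs‖ < 1 := by
    rw [← dist_eq_norm]
    exact (lt_div_iff₀' hγ0).1 (one_div γ ▸ hx)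
  calc β * ‖iteratedFDeriv ℝ 2 F x‖
      ≤ β * (2 ! * ‖(taylorSeries ℝ F xs).changeOrigin (x - xs) 2‖) := by
        gcongr; exact hTx.norm_iteratedFDeriv_le 2
    _ ≤ β * (2 ! * ((β * γ)⁻¹ * γ ^ 2 / (1 - γ * ‖x - xs‖) ^ (2 + 1))) := by
        gcongr
        exact FormalMultilinearSeries.norm_changeOrigin_le_of_norm_le_mul_pow hcoeff hγ0.le hγx
    _ = 2 * γ / (1 - γ * ‖x - xs‖) ^ 3 := by
        rw [Nat.factorial_two, Nat.cast_two]
        field_simp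

/-- Smale-type estimate: if `F` is analytic on `Ω`,
`γ = sup_{n>1} (β ‖F⁽ⁿ⁾(x*)/n!‖)^{1/(n-1)} < ∞` and `B(x*, 1/γ) ⊆ Ω`, then for all
`x ∈ B(x*, 1/γ)` one has `β ‖F''(x)‖ ≤ 2γ / (1 - γ ‖x - x*‖)³`. -/
theorem stmt_19 {X Y : Type*}
    [NormedAddCommGroup X] [InnerProductSpace ℝ X] [CompleteSpace X]
    [NormedAddCommGroup Y] [InnerProductSpace ℝ Y] [CompleteSpace Y]
    (Ω : Set X) (hΩ : IsOpen Ω)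
    (F : X → Y) (hF : AnalyticOnNhd ℝ F Ω)
    (xs : X) (hxs : xs ∈ Ω) (β : ℝ) (hβ : 0 < β)
    (γ : ℝ) (hγpos : 0 < γ)
    (hbdd : BddAbove (Set.range fun n : {n : ℕ // 1 < n} =>
      (β * ‖iteratedFDeriv ℝ n.1 F xs‖ / (n.1.factorial : ℝ)) ^ ((n.1 - 1 : ℝ)⁻¹)))
    (hγ : γ = ⨆ n : {n : ℕ // 1 < n},
      (β * ‖iteratedFDeriv ℝ n.1 F xs‖ / (n.1.factorial : ℝ)) ^ ((n.1 - 1 : ℝ)⁻¹))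
    (hball : Metric.ball xs (1 / γ) ⊆ Ω) :
    ∀ x ∈ Metric.ball xs (1 / γ),
      β * ‖iteratedFDeriv ℝ 2 F x‖ ≤ 2 * γ / (1 - γ * ‖x - xs‖) ^ 3 :=
  stmt_19_general Ω F hF xs β hβ γ hbdd hγ hball
end
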